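/- arXiv:2012.14562 — 5 statements merged into one kernel-verified Lean document; each statement's English description precedes it below -/
import Mathlib

section
/- Let 0 < α < 2, β > 0, C₀ ∈ ℝ, and λ₀ > 0 be such that 2β/(2−α) + C₀ μ^{2−α} > 0 for all μ ∈ (0, λ₀]. Define 𝓕(λ) := ∫_λ^{λ₀} μ^{−α/2−1} · (2β/(2−α) + C₀ μ^{2−α})^{−1/2} dμ for λ ∈ (0, λ₀]. Then there exists a constant C > 0 (depending on α, β, C₀, λ₀) such that for all λ ∈ (0, λ₀]: |𝓕(λ) − (2/α) · (2β/(2−α))^{−1/2} · λ^{−α/2}| ≤ C (λ^{−α/4} + λ^{2−3α/2}). -/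
open MeasureTheory intervalIntegral Set

/-!
With `A = 2β/(2-α)` the integrand is `μ^(-α/2-1) A^(-1/2)` up to an error: `A + C₀ μ^(2-α)`
stays above some `m > 0` on `(0, λ₀]`, where `x ↦ x^(-1/2)` is Lipschitz with constant
`1/(2 m √m)`, so the error is `O(μ^(1-3α/2))`. The leading term integrates to
`(2/α) A^(-1/2) (λ^(-α/2) - λ₀^(-α/2))`. For the error, the exponent
`e = min(-α/4, 2-3α/2) < 0` gives `μ^(1-3α/2) ≤ λ₀^(2-3α/2-e) μ^(e-1)`, whose integral is
`O(λ^e)`; passing to `e` avoids the logarithm that `∫ μ^(1-3α/2)` produces at `α = 4/3`.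
-/

lemma abs_rpow_neg_half_sub_le {a b m : ℝ} (hm : 0 < m) (ha : m ≤ a) (hb : m ≤ b) :
    |a ^ (-(1:ℝ) / 2) - b ^ (-(1:ℝ) / 2)| ≤ |a - b| / (2 * m * √m) := by
  have ha0 : 0 < a := hm.trans_le ha
  have hb0 : 0 < b := hm.trans_le hb
  have hsa : √m ≤ √a := Real.sqrt_le_sqrt ha
  have hsb : √m ≤ √b := Real.sqrt_le_sqrt hb
  have hsm : 0 < √m := Real.sqrt_pos.mpr hm
  have rpow_eq (x : ℝ) (hx : 0 < x) : x ^ (-(1:ℝ) / 2) = (√x)⁻¹ := by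
    rw [neg_div, Real.rpow_neg hx.le, Real.sqrt_eq_rpow]
  have key : (√a)⁻¹ - (√b)⁻¹ = (b - a) / (√a * √b * (√a + √b)) := by
    field_simp
    linear_combination Real.sq_sqrt hb0.le - Real.sq_sqrt ha0.le
  rw [rpow_eq a ha0, rpow_eq b hb0, key, abs_div, abs_sub_comm b a,
    abs_of_pos (by positivity : 0 < √a * √b * (√a + √b))]
  refine div_le_div_of_nonneg_left (abs_nonneg _) (by positivity) ?_
  calc 2 * m * √m = √m * √m * (√m + √m) := by rw [Real.mul_self_sqrt hm.le]; ring
    _ ≤ √a * √b * (√a + √b) := by gcongr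

lemma exists_pos_le_add_mul_rpow {A C q b : ℝ} (hA : 0 < A) (hq : 0 ≤ q)
    (hpos : 0 < A + C * b ^ q) :
    ∃ m, 0 < m ∧ m ≤ A ∧ ∀ μ ∈ Ioc 0 b, m ≤ A + C * μ ^ q := by
  refine ⟨min A (A + C * b ^ q), lt_min hA hpos, min_le_left _ _, fun μ hμ => ?_⟩
  have hμq : μ ^ q ≤ b ^ q := Real.rpow_le_rpow hμ.1.le hμ.2 hq
  rcases le_total 0 C with hC | hC
  · exact (min_le_left _ _).trans (by nlinarith [Real.rpow_nonneg hμ.1.le q])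
  · exact (min_le_right _ _).trans (by nlinarith)

lemma rpow_sub_one_le_mul_rpow_sub_one {μ b s e : ℝ} (hμ : 0 < μ) (hμb : μ ≤ b)
    (hes : e ≤ s) :
    μ ^ (s - 1) ≤ b ^ (s - e) * μ ^ (e - 1) := by
  calc μ ^ (s - 1) = μ ^ (s - e) * μ ^ (e - 1) := by
        rw [← Real.rpow_add hμ, sub_add_sub_cancel]
    _ ≤ b ^ (s - e) * μ ^ (e - 1) := by gcongr

lemma integral_rpow_sub_one {a b r : ℝ} (hr : r ≠ 0) (ha : 0 < a) (hab : a ≤ b) :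
    ∫ x in a..b, x ^ (r - 1) = (b ^ r - a ^ r) / r := by
  have hr' : r - 1 ≠ -1 := by contrapose! hr; linarith
  rw [integral_rpow (Or.inr ⟨hr', by simp [uIcc_of_le hab, ha.not_ge]⟩), sub_add_cancel]

lemma abs_integral_sub_rpow_le {f : ℝ → ℝ} {c K r e lam lam₀ : ℝ} (hr : r < 0)
    (he : e < 0) (hK : 0 ≤ K) (hlam : 0 < lam) (hlam_le : lam ≤ lam₀)
    (hf : ContinuousOn f (Icc lam lam₀))
    (hbound : ∀ μ ∈ Icc lam lam₀, |f μ - c * μ ^ (r - 1)| ≤ K * μ ^ (e - 1)) :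
    |(∫ μ in lam..lam₀, f μ) - c / -r * lam ^ r|
      ≤ K / -e * lam ^ e + |c| / -r * lam₀ ^ r := by
  have hpow_cont (s : ℝ) : ContinuousOn (fun μ : ℝ => μ ^ s) (Icc lam lam₀) :=
    continuousOn_id.rpow_const fun μ hμ => Or.inl (hlam.trans_le hμ.1).ne'
  have hf_int : IntervalIntegrable f volume lam lam₀ := hf.intervalIntegrable_of_Icc hlam_le
  have hmain_int : IntervalIntegrable (fun μ => c * μ ^ (r - 1)) volume lam lam₀ :=
    (continuousOn_const.mul (hpow_cont _)).intervalIntegrable_of_Icc hlam_le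
  have hbound_int : IntervalIntegrable (fun μ => K * μ ^ (e - 1)) volume lam lam₀ :=
    (continuousOn_const.mul (hpow_cont _)).intervalIntegrable_of_Icc hlam_le
  have hsplit : (∫ μ in lam..lam₀, f μ) - c / -r * lam ^ r
      = (∫ μ in lam..lam₀, (f μ - c * μ ^ (r - 1))) - c / -r * lam₀ ^ r := by
    rw [integral_sub hf_int hmain_int, intervalIntegral.integral_const_mul,
      integral_rpow_sub_one hr.ne hlam hlam_le]
    field_simp
    ring
  have herror : |∫ μ in lam..lam₀, (f μ - c * μ ^ (r - 1))| ≤ K / -e * lam ^ e :=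
    calc |∫ μ in lam..lam₀, (f μ - c * μ ^ (r - 1))|
        ≤ ∫ μ in lam..lam₀, K * μ ^ (e - 1) :=
          abs_integral_le_integral_abs hlam_le |>.trans
            (integral_mono_on hlam_le (hf_int.sub hmain_int).abs hbound_int hbound)
      _ = K / -e * (lam ^ e - lam₀ ^ e) := by
          rw [intervalIntegral.integral_const_mul, integral_rpow_sub_one he.ne hlam hlam_le]
          field_simp
          ring
      _ ≤ K / -e * lam ^ e := by
          have : 0 ≤ K / -e := div_nonneg hK (neg_nonneg.mpr he.le)
          nlinarith [Real.rpow_nonneg (hlam.le.trans hlam_le) e]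
  rw [hsplit]
  refine (abs_sub _ _).trans (add_le_add herror (le_of_eq ?_))
  rw [abs_mul, abs_div, abs_neg, abs_of_neg hr,
    abs_of_nonneg (Real.rpow_nonneg (hlam.le.trans hlam_le) _)]

lemma exists_abs_integral_sub_rpow_le {f : ℝ → ℝ} {c K r e lam₀ : ℝ} (hr : r < 0)
    (he : e < 0) (hK : 0 ≤ K) (hf : ContinuousOn f (Ioc 0 lam₀))
    (hbound : ∀ μ ∈ Ioc 0 lam₀, |f μ - c * μ ^ (r - 1)| ≤ K * μ ^ (e - 1)) :
    ∃ C, 0 < C ∧ ∀ lam ∈ Ioc 0 lam₀,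
      |(∫ μ in lam..lam₀, f μ) - c / -r * lam ^ r| ≤ C * lam ^ e := by
  refine ⟨max (K / -e + |c| / -r * lam₀ ^ (r - e)) 1, lt_max_of_lt_right one_pos,
    fun lam ⟨hlam, hlam_le⟩ => ?_⟩
  have hlam₀ : 0 < lam₀ := hlam.trans_le hlam_le
  have hlam₀_pow : lam₀ ^ r ≤ lam₀ ^ (r - e) * lam ^ e := by
    rw [← sub_add_cancel r e, Real.rpow_add hlam₀, add_sub_cancel_right]
    exact mul_le_mul_of_nonneg_left (Real.rpow_le_rpow_of_nonpos hlam hlam_le he.le)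
      (by positivity)
  calc |(∫ μ in lam..lam₀, f μ) - c / -r * lam ^ r|
      ≤ K / -e * lam ^ e + |c| / -r * lam₀ ^ r :=
        abs_integral_sub_rpow_le hr he hK hlam hlam_le (hf.mono (Icc_subset_Ioc hlam le_rfl))
          fun μ hμ => hbound μ ⟨hlam.trans_le hμ.1, hμ.2⟩
    _ ≤ (K / -e + |c| / -r * lam₀ ^ (r - e)) * lam ^ e := by
        rw [add_mul, mul_assoc _ (lam₀ ^ _)]
        gcongr
        exact div_nonneg (abs_nonneg c) (by linarith)
    _ ≤ max (K / -e + |c| / -r * lam₀ ^ (r - e)) 1 * lam ^ e := by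
        gcongr
        exact le_max_left _ _

lemma abs_rpow_mul_rpow_neg_half_sub_le {A C m μ b r q e : ℝ} (hm : 0 < m) (hmA : m ≤ A)
    (hmμ : m ≤ A + C * μ ^ q) (hμ : 0 < μ) (hμb : μ ≤ b) (he : e ≤ r + q) :
    |μ ^ (r - 1) * (A + C * μ ^ q) ^ (-(1:ℝ) / 2) - A ^ (-(1:ℝ) / 2) * μ ^ (r - 1)|
      ≤ |C| / (2 * m * √m) * b ^ (r + q - e) * μ ^ (e - 1) := by
  have hdiff := abs_rpow_neg_half_sub_le hm hmμ hmA
  rw [add_sub_cancel_left, abs_mul, abs_of_nonneg (Real.rpow_nonneg hμ.le q)] at hdiff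
  calc |μ ^ (r - 1) * (A + C * μ ^ q) ^ (-(1:ℝ) / 2) - A ^ (-(1:ℝ) / 2) * μ ^ (r - 1)|
      = μ ^ (r - 1) * |(A + C * μ ^ q) ^ (-(1:ℝ) / 2) - A ^ (-(1:ℝ) / 2)| := by
        rw [mul_comm (A ^ _), ← mul_sub, abs_mul, abs_of_nonneg (Real.rpow_nonneg hμ.le _)]
    _ ≤ μ ^ (r - 1) * (|C| * μ ^ q / (2 * m * √m)) := by gcongr
    _ = |C| / (2 * m * √m) * μ ^ (r + q - 1) := by
        rw [show r + q - 1 = r - 1 + q by ring, Real.rpow_add hμ]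
        ring
    _ ≤ |C| / (2 * m * √m) * (b ^ (r + q - e) * μ ^ (e - 1)) := by
        gcongr
        exact rpow_sub_one_le_mul_rpow_sub_one hμ hμb he
    _ = |C| / (2 * m * √m) * b ^ (r + q - e) * μ ^ (e - 1) := by ring

lemma rpow_min_le_rpow_add_rpow {x : ℝ} (hx : 0 ≤ x) (a b : ℝ) :
    x ^ min a b ≤ x ^ a + x ^ b := by
  rcases min_choice a b with h | h <;> rw [h]
  · exact le_add_of_nonneg_right (Real.rpow_nonneg hx b)
  · exact le_add_of_nonneg_left (Real.rpow_nonneg hx a)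

/-- asymptotics of the integral `𝓕(λ) = ∫_λ^{λ₀} μ^{−α/2−1}(2β/(2−α)+C₀μ^{2−α})^{−1/2} dμ`:
`|𝓕(λ) − (2/α)(2β/(2−α))^{−1/2} λ^{−α/2}| ≤ C (λ^{−α/4} + λ^{2−3α/2})` on `(0, λ₀]`. -/
theorem F_asymptotics (α β C₀ lam₀ : ℝ) (hα0 : 0 < α) (hα2 : α < 2) (hβ : 0 < β)
    (hlam₀ : 0 < lam₀)
    (hpos : ∀ μ ∈ Set.Ioc (0 : ℝ) lam₀, 0 < 2 * β / (2 - α) + C₀ * μ ^ (2 - α)) :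
    ∃ C : ℝ, 0 < C ∧ ∀ lam ∈ Set.Ioc (0 : ℝ) lam₀,
      |(∫ μ in lam..lam₀, μ ^ (-α / 2 - 1) * (2 * β / (2 - α) + C₀ * μ ^ (2 - α)) ^ (-(1:ℝ) / 2)) -
          (2 / α) * (2 * β / (2 - α)) ^ (-(1:ℝ) / 2) * lam ^ (-α / 2)|
        ≤ C * (lam ^ (-α / 4) + lam ^ (2 - 3 * α / 2)) := by
  set A := 2 * β / (2 - α)
  have hA : 0 < A := div_pos (by positivity) (by linarith)
  obtain ⟨m, hm, hmA, hmμ⟩ :=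
    exists_pos_le_add_mul_rpow hA (by linarith) (hpos lam₀ ⟨hlam₀, le_rfl⟩)
  set e := min (-α / 4) (2 - 3 * α / 2)
  have he : e < 0 := (min_le_left _ _).trans_lt (by linarith)
  have hcont : ContinuousOn
      (fun μ => μ ^ (-α / 2 - 1) * (A + C₀ * μ ^ (2 - α)) ^ (-(1:ℝ) / 2))
      (Ioc 0 lam₀) := by
    refine ContinuousOn.mul (continuousOn_id.rpow_const fun μ hμ => Or.inl hμ.1.ne')
      (ContinuousOn.rpow_const ?_ fun μ hμ => Or.inl (hpos μ hμ).ne')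
    exact continuousOn_const.add (continuousOn_const.mul
      (continuousOn_id.rpow_const fun _ _ => Or.inr (by linarith)))
  obtain ⟨C, hC, hFC⟩ := exists_abs_integral_sub_rpow_le (c := A ^ (-(1:ℝ) / 2))
    (r := -α / 2) (by linarith) he (by positivity) hcont fun μ hμ =>
      abs_rpow_mul_rpow_neg_half_sub_le hm hmA (hmμ μ hμ) hμ.1 hμ.2
        (by linarith [min_le_right (-α / 4) (2 - 3 * α / 2)])
  have hlead : 2 / α * A ^ (-(1:ℝ) / 2) = A ^ (-(1:ℝ) / 2) / -(-α / 2) := by field_simp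
  refine ⟨C, hC, fun lam hlam => ?_⟩
  rw [hlead]
  exact (hFC lam hlam).trans
    (mul_le_mul_of_nonneg_left (rpow_min_le_rpow_add_rpow hlam.1.le _ _) hC.le)
end

section
/- Let N ≥ 1, let q > 0, and let w : ℝ^N → ℂ be a Schwartz function. Then Re ∫_{ℝ^N} |w(x)|^q w(x) · conj((Λw)(x)) dx = (N q / (2(q+2))) ∫_{ℝ^N} |w(x)|^{q+2} dx, i.e. (|w|^q w, Λw)₂ = (Nq/(2(q+2))) ‖w‖_{q+2}^{q+2}. -/
/-!
Pointwise, `|w|^q Re(w conj(Dw·v)) = (q+2)⁻¹ D(|w|^(q+2))·v`, so the `x·∇w` part of the pairing is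
`(q+2)⁻¹ ∫ x·∇(|w|^(q+2))`. For a decaying C¹ function `g`, integrating by parts against each
coordinate function `x_i` (whose derivative along `e_i` is 1) gives Euler's identity
`∫ x·∇g = -N ∫ g`. Hence the pairing is `(N/2 - N/(q+2)) ‖w‖_{q+2}^{q+2}`.
-/

open MeasureTheory Filter Complex

open Module

section Euler

variable {E G : Type*} [NormedAddCommGroup E] [NormedSpace ℝ E] [MeasurableSpace E]
  [NormedAddCommGroup G] [NormedSpace ℝ G] [FiniteDimensional ℝ E] [BorelSpace E]
  {μ : Measure E} {g : E → G}

theorem integrable_fderiv_apply_self (hg : ContDiff ℝ 1 g)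
    (hDg : Integrable (fun x ↦ ‖x‖ * ‖fderiv ℝ g x‖) μ) :
    Integrable (fun x ↦ fderiv ℝ g x x) μ := by
  refine hDg.mono' ?_ (ae_of_all _ fun x ↦ ?_)
  · exact ((hg.continuous_fderiv one_ne_zero).clm_apply continuous_id).aestronglyMeasurable
  · rw [mul_comm]
    exact (fderiv ℝ g x).le_opNorm x

variable [μ.IsAddHaarMeasure]

theorem integral_fderiv_apply_self (hg : ContDiff ℝ 1 g) (hg_int : Integrable g μ)
    (hxg : Integrable (fun x ↦ ‖x‖ * ‖g x‖) μ)
    (hDg : Integrable (fun x ↦ ‖x‖ * ‖fderiv ℝ g x‖) μ) :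
    ∫ x, fderiv ℝ g x x ∂μ = -(finrank ℝ E : ℝ) • ∫ x, g x ∂μ := by
  set b := finBasis ℝ E
  let coord : Fin (finrank ℝ E) → E →L[ℝ] ℝ := fun i ↦ LinearMap.toContinuousLinearMap (b.coord i)
  have hcoord : ∀ i x, coord i x = b.repr x i := fun i x ↦ b.coord_apply i x
  have hsplit : ∀ x, fderiv ℝ g x x = ∑ i, coord i x • fderiv ℝ g x (b i) := by
    intro x
    calc fderiv ℝ g x x = fderiv ℝ g x (∑ i, b.repr x i • b i) := by rw [b.sum_repr]
      _ = _ := by simp only [map_sum, map_smul, hcoord]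
  have hcont : Continuous (fderiv ℝ g) := hg.continuous_fderiv one_ne_zero
  have hint : ∀ i, Integrable (fun x ↦ coord i x • fderiv ℝ g x (b i)) μ := by
    intro i
    refine (hDg.const_mul (‖coord i‖ * ‖b i‖)).mono' (by fun_prop) (ae_of_all _ fun x ↦ ?_)
    calc ‖coord i x • fderiv ℝ g x (b i)‖ = ‖coord i x‖ * ‖fderiv ℝ g x (b i)‖ := norm_smul _ _
      _ ≤ (‖coord i‖ * ‖x‖) * (‖fderiv ℝ g x‖ * ‖b i‖) := by
        gcongr
        · exact (coord i).le_opNorm x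
        · exact (fderiv ℝ g x).le_opNorm (b i)
      _ = ‖coord i‖ * ‖b i‖ * (‖x‖ * ‖fderiv ℝ g x‖) := by ring
  have hcoord_int : ∀ i, Integrable (fun x ↦ coord i x • g x) μ := by
    intro i
    refine (hxg.const_mul ‖coord i‖).mono' (by have := hg.continuous; fun_prop)
      (ae_of_all _ fun x ↦ ?_)
    rw [norm_smul, ← mul_assoc]
    gcongr
    exact (coord i).le_opNorm x
  have hibp : ∀ i, ∫ x, coord i x • fderiv ℝ g x (b i) ∂μ = -∫ x, g x ∂μ := by
    intro i
    rw [integral_smul_fderiv_eq_neg_fderiv_smul_of_integrable _ (hint i) (hcoord_int i)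
      (fun x _ ↦ (coord i).differentiableAt) (fun x _ ↦ hg.differentiable one_ne_zero x)]
    · simp [ContinuousLinearMap.fderiv, hcoord]
    · simpa [ContinuousLinearMap.fderiv, hcoord] using hg_int
  simp_rw [hsplit]
  rw [integral_finsetSum _ fun i _ ↦ hint i]
  simp [hibp, Nat.cast_smul_eq_nsmul]

end Euler

namespace SchwartzMap

variable {E F : Type*} [NormedAddCommGroup E] [NormedSpace ℝ E] [NormedAddCommGroup F]
  [InnerProductSpace ℝ F] {p : ℝ} (f : 𝓢(E, F))

theorem norm_rpow_le_seminorm_rpow_mul (hp : 1 ≤ p) (x : E) :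
    ‖f x‖ ^ p ≤ SchwartzMap.seminorm ℝ 0 0 f ^ (p - 1) * ‖f x‖ := by
  calc ‖f x‖ ^ p = ‖f x‖ ^ (p - 1) * ‖f x‖ := by
        rw [← Real.rpow_add_one' (norm_nonneg _) (by linarith), sub_add_cancel]
    _ ≤ SchwartzMap.seminorm ℝ 0 0 f ^ (p - 1) * ‖f x‖ := by
        gcongr
        exact f.norm_le_seminorm ℝ x

variable [FiniteDimensional ℝ E] [MeasurableSpace E] [BorelSpace E] {μ : Measure E}
  [μ.HasTemperateGrowth]

theorem integrable_pow_mul_norm_rpow (k : ℕ) (hp : 1 ≤ p) :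
    Integrable (fun x ↦ ‖x‖ ^ k * ‖f x‖ ^ p) μ := by
  refine ((f.integrable_pow_mul μ k).const_mul (SchwartzMap.seminorm ℝ 0 0 f ^ (p - 1))).mono'
    (by have := f.continuous; fun_prop (disch := linarith)) (ae_of_all _ fun x ↦ ?_)
  rw [Real.norm_of_nonneg (by positivity), mul_left_comm]
  gcongr
  exact f.norm_rpow_le_seminorm_rpow_mul hp x

theorem integrable_norm_mul_norm_fderiv_norm_rpow (hp : 1 < p) :
    Integrable (fun x ↦ ‖x‖ * ‖fderiv ℝ (fun y ↦ ‖f y‖ ^ p) x‖) μ := by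
  have hDf : Integrable (fun x ↦ ‖x‖ * ‖fderiv ℝ f x‖) μ := by
    simpa using (fderivCLM ℝ E F f).integrable_pow_mul μ 1
  have hcont := ((f.smooth 1).norm_rpow hp).continuous_fderiv one_ne_zero
  refine (hDf.const_mul (p * SchwartzMap.seminorm ℝ 0 0 f ^ (p - 1))).mono' (by fun_prop)
    (ae_of_all _ fun x ↦ ?_)
  calc ‖‖x‖ * ‖fderiv ℝ (fun y ↦ ‖f y‖ ^ p) x‖‖
      = ‖x‖ * ‖fderiv ℝ (fun y ↦ ‖f y‖ ^ p) x‖ := Real.norm_of_nonneg (by positivity)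
    _ ≤ ‖x‖ * (p * ‖f x‖ ^ (p - 1) * ‖fderiv ℝ f x‖) := by
        gcongr
        exact norm_fderiv_norm_rpow_le f.differentiable hp
    _ ≤ ‖x‖ * (p * SchwartzMap.seminorm ℝ 0 0 f ^ (p - 1) * ‖fderiv ℝ f x‖) := by
        gcongr
        exact f.norm_le_seminorm ℝ x
    _ = p * SchwartzMap.seminorm ℝ 0 0 f ^ (p - 1) * (‖x‖ * ‖fderiv ℝ f x‖) := by ring

theorem integral_fderiv_norm_rpow_apply_self [μ.IsAddHaarMeasure] (hp : 1 < p) :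
    ∫ x, fderiv ℝ (fun y ↦ ‖f y‖ ^ p) x x ∂μ = -(finrank ℝ E : ℝ) * ∫ x, ‖f x‖ ^ p ∂μ := by
  have hint := f.integrable_pow_mul_norm_rpow (μ := μ) 0 hp.le
  have hxint := f.integrable_pow_mul_norm_rpow (μ := μ) 1 hp.le
  simp only [pow_zero, one_mul, pow_one] at hint hxint
  simpa using integral_fderiv_apply_self ((f.smooth 1).norm_rpow hp) hint
    (by simpa [Real.abs_rpow_of_nonneg] using hxint)
    (f.integrable_norm_mul_norm_fderiv_norm_rpow hp)

end SchwartzMap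

theorem Complex.re_mul_conj_ofReal_mul_add (z v : ℂ) (c : ℝ) :
    (z * (starRingEnd ℂ) (c * z + v)).re = c * ‖z‖ ^ 2 + inner ℝ z v := by
  simp [Complex.inner, Complex.mul_re, Complex.sq_norm, Complex.normSq_apply]
  ring

theorem power_inner_scaling_general (N : ℕ) (q : ℝ) (hq : 0 < q)
    (w : SchwartzMap (EuclideanSpace ℝ (Fin N)) ℂ) :
    (∫ x, ‖w x‖ ^ q *
        (w x * (starRingEnd ℂ) (((N : ℂ) / 2) * w x + fderiv ℝ (⇑w) x x)).re) =
      (N * q / (2 * (q + 2))) * ∫ x, ‖w x‖ ^ (q + 2) := by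
  have hp : 1 < q + 2 := by linarith
  have hpt : ∀ x, ‖w x‖ ^ q *
      (w x * (starRingEnd ℂ) (((N : ℂ) / 2) * w x + fderiv ℝ (⇑w) x x)).re =
      N / 2 * ‖w x‖ ^ (q + 2) + (q + 2)⁻¹ * fderiv ℝ (fun y ↦ ‖w y‖ ^ (q + 2)) x x := by
    intro x
    have hcast : ((N : ℂ) / 2) = ((N / 2 : ℝ) : ℂ) := by push_cast; rfl
    rw [hcast, Complex.re_mul_conj_ofReal_mul_add, w.differentiable.fderiv_norm_rpow hp,
      add_sub_cancel_right, Real.rpow_add' (norm_nonneg _) (by linarith), Real.rpow_two]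
    simp only [_root_.smul_apply, ContinuousLinearMap.comp_apply,
      innerSL_apply_apply, smul_eq_mul]
    field_simp
  simp_rw [hpt]
  have hint : Integrable (fun x ↦ ‖w x‖ ^ (q + 2)) := by
    simpa using w.integrable_pow_mul_norm_rpow 0 hp.le
  have hDint := integrable_fderiv_apply_self ((w.smooth 1).norm_rpow hp)
    (w.integrable_norm_mul_norm_fderiv_norm_rpow (μ := volume) hp)
  rw [integral_add (hint.const_mul _) (hDint.const_mul _), integral_const_mul, integral_const_mul,
    w.integral_fderiv_norm_rpow_apply_self hp, finrank_euclideanSpace_fin]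
  field_simp
  ring

/-- for Schwartz `w` and `q > 0`,
`(|w|^q w, Λw)₂ = (Nq/(2(q+2))) ‖w‖_{q+2}^{q+2}`, where `Λw = (N/2)w + x·∇w`. -/
theorem power_inner_scaling (N : ℕ) (hN : 1 ≤ N) (q : ℝ) (hq : 0 < q)
    (w : SchwartzMap (EuclideanSpace ℝ (Fin N)) ℂ) :
    (∫ x, ‖w x‖ ^ q *
        (w x * (starRingEnd ℂ) (((N : ℂ) / 2) * w x + fderiv ℝ (⇑w) x x)).re) =
      (N * q / (2 * (q + 2))) * ∫ x, ‖w x‖ ^ (q + 2) :=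
  power_inner_scaling_general N q hq w
end

section
/- For every q with 0 < q ≤ 1 there exists a constant C > 0 such that for all z, w ∈ ℂ: | f(z+w) − f(z) − df(z)(w) | ≤ C |w|^{1+q}, where f(z) := |z|^q z and df(z) denotes its real Fréchet differential (with df(0) := 0). -/
/-!
Write `r = |z|`, `s = |w|`, `ρ = |z + w|` and `D = q r^(q-2) Re(z̄ w)`. If `r ≤ 2s`, every term
of the remainder is at most a constant times `s^(1+q)`. If `r > 2s`, then `r/2 < ρ < 3r/2` and the
remainder equals `(ρ^q - r^q - D)(z + w) + D w`. Since `ρ² = r² + 2 Re(z̄ w) + s²`, the scalar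
`ρ^q - r^q - D` is, up to `(q/2) r^(q-2) s²`, the first-order Taylor remainder of the concave map
`t ↦ t^(q/2)` at `r²`; squeezing it between the tangent lines at `r²` and `ρ²` bounds it by
`O(r^(q-2) s²)`. Hence the remainder is `O(r^(q-1) s²)`, which is `O(s^(1+q))` because `q ≤ 1`
and `s < r`.
-/

open Complex

theorem rpow_le_rpow_add_mul_sub {p a b : ℝ} (hp0 : 0 ≤ p) (hp1 : p ≤ 1) (ha : 0 < a)
    (hb : 0 ≤ b) : b ^ p ≤ a ^ p + p * (a ^ p / a) * (b - a) := by
  have h := rpow_one_add_le_one_add_mul_self (s := b / a - 1) (by linarith [div_nonneg hb ha.le])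
    hp0 hp1
  rw [add_sub_cancel, Real.div_rpow hb ha.le, div_le_iff₀ (by positivity)] at h
  calc b ^ p ≤ (1 + p * (b / a - 1)) * a ^ p := h
    _ = a ^ p + p * (a ^ p / a) * (b - a) := by field_simp

theorem abs_rpow_sub_rpow_sub_mul_le {p a b : ℝ} (hp0 : 0 ≤ p) (hp1 : p ≤ 1) (ha : 0 < a)
    (hb : 0 < b) :
    |b ^ p - a ^ p - p * (a ^ p / a) * (b - a)| ≤ p * (a ^ p / a) * (b - a) ^ 2 / b := by
  have tangent_at_a := rpow_le_rpow_add_mul_sub hp0 hp1 ha hb.le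
  have tangent_at_b := rpow_le_rpow_add_mul_sub hp0 hp1 hb ha.le
  have mono : 0 ≤ (b - a) * (b ^ p - a ^ p) := by
    rcases le_total a b with hab | hab
    · exact mul_nonneg (by linarith) (by linarith [Real.rpow_le_rpow ha.le hab hp0])
    · exact mul_nonneg_of_nonpos_of_nonpos (by linarith)
        (by linarith [Real.rpow_le_rpow hb.le hab hp0])
  have hα : 0 ≤ a ^ p := Real.rpow_nonneg ha.le p
  generalize a ^ p = α at *
  generalize b ^ p = β at *
  have key : 0 ≤ b * (β - α) - p * α * (b - a) := by
    have scaled : b * α ≤ b * β + p * β * (a - b) := by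
      have := mul_le_mul_of_nonneg_left tangent_at_b hb.le
      rwa [mul_add, show b * (p * (β / b) * (a - b)) = p * β * (a - b) by field_simp] at this
    linarith [mul_nonneg hp0 mono]
  rw [abs_le]
  constructor
  · calc -(p * (α / a) * (b - a) ^ 2 / b)
        ≤ -(p * (α / a) * (b - a) ^ 2 / b) + (b * (β - α) - p * α * (b - a)) / b :=
          le_add_of_nonneg_right (div_nonneg key hb.le)
      _ = β - α - p * (α / a) * (b - a) := by field_simp; ring
  · have : 0 ≤ p * (α / a) * (b - a) ^ 2 / b := by positivity
    linarith

theorem rpow_sub_two_mul_sq {q r : ℝ} (hq : q ≠ 0) (hr : 0 ≤ r) : r ^ (q - 2) * r ^ 2 = r ^ q := by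
  rw [← Real.rpow_two, ← Real.rpow_add' hr (by simpa using hq), sub_add_cancel]

theorem rpow_sub_one_mul_sq_le_rpow_one_add {q r s : ℝ} (hq : q ≤ 1) (hs : 0 ≤ s) (hsr : s ≤ r) :
    r ^ (q - 1) * s ^ 2 ≤ s ^ (1 + q) := by
  rcases hs.eq_or_lt with rfl | hs_pos
  · simp [Real.rpow_nonneg]
  calc r ^ (q - 1) * s ^ 2 ≤ s ^ (q - 1) * s ^ 2 :=
        mul_le_mul_of_nonneg_right
          (Real.rpow_le_rpow_of_nonpos hs_pos hsr (by linarith)) (sq_nonneg s)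
    _ = s ^ (1 + q) := by
        rw [← Real.rpow_two, ← Real.rpow_add hs_pos]
        ring_nf

noncomputable def powMul (q : ℝ) (z : ℂ) : ℂ := ((‖z‖ ^ q : ℝ) : ℂ) * z

noncomputable def powMulDeriv (q : ℝ) (z w : ℂ) : ℂ :=
  ((‖z‖ ^ q : ℝ) : ℂ) * w + ((q * ‖z‖ ^ (q - 2) * ((starRingEnd ℂ) z * w).re : ℝ) : ℂ) * z

theorem norm_powMul (q : ℝ) (z : ℂ) : ‖powMul q z‖ = ‖z‖ ^ q * ‖z‖ := by
  rw [powMul, norm_mul, norm_real, Real.norm_of_nonneg (Real.rpow_nonneg (norm_nonneg z) q)]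

theorem abs_re_conj_mul_le (z w : ℂ) : |((starRingEnd ℂ) z * w).re| ≤ ‖z‖ * ‖w‖ := by
  simpa only [norm_mul, norm_conj] using abs_re_le_norm ((starRingEnd ℂ) z * w)

theorem abs_mul_rpow_sub_two_mul_re_le {q : ℝ} (hq : 0 ≤ q) (z w : ℂ) :
    |q * ‖z‖ ^ (q - 2) * ((starRingEnd ℂ) z * w).re| ≤ q * ‖z‖ ^ (q - 2) * (‖z‖ * ‖w‖) := by
  rw [abs_mul, abs_of_nonneg (by positivity)]
  exact mul_le_mul_of_nonneg_left (abs_re_conj_mul_le z w) (by positivity)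

theorem norm_powMulDeriv_le {q : ℝ} (hq : 0 < q) (z w : ℂ) :
    ‖powMulDeriv q z w‖ ≤ (1 + q) * ‖z‖ ^ q * ‖w‖ := by
  set r := ‖z‖
  calc ‖powMulDeriv q z w‖
      ≤ r ^ q * ‖w‖ + |q * r ^ (q - 2) * ((starRingEnd ℂ) z * w).re| * r := by
        refine (norm_add_le _ _).trans_eq ?_
        rw [norm_mul, norm_mul, norm_real, norm_real, Real.norm_eq_abs, Real.norm_eq_abs,
          abs_of_nonneg (Real.rpow_nonneg (norm_nonneg z) q)]
    _ ≤ r ^ q * ‖w‖ + q * r ^ (q - 2) * (r * ‖w‖) * r := by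
        gcongr; exact abs_mul_rpow_sub_two_mul_re_le hq.le z w
    _ = (1 + q) * r ^ q * ‖w‖ := by
        rw [← rpow_sub_two_mul_sq hq.ne' (norm_nonneg z)]; ring

theorem norm_powMul_add_sub_sub_le_of_norm_le {q : ℝ} (hq : 0 < q) {z w : ℂ} (h : ‖z‖ ≤ 2 * ‖w‖) :
    ‖powMul q (z + w) - powMul q z - powMulDeriv q z w‖ ≤ (3 + q) * (3 * ‖w‖) ^ (1 + q) := by
  set M := 3 * ‖w‖
  have hzw : ‖z + w‖ ≤ M := by linarith [norm_add_le z w]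
  have hz : ‖z‖ ≤ M := by linarith [norm_nonneg w]
  have hw : ‖w‖ ≤ M := by linarith [norm_nonneg w]
  calc ‖powMul q (z + w) - powMul q z - powMulDeriv q z w‖
      ≤ ‖z + w‖ ^ q * ‖z + w‖ + ‖z‖ ^ q * ‖z‖ + (1 + q) * ‖z‖ ^ q * ‖w‖ := by
        rw [← norm_powMul, ← norm_powMul]
        exact (norm_sub_le _ _).trans (add_le_add (norm_sub_le _ _) (norm_powMulDeriv_le hq z w))
    _ ≤ M ^ q * M + M ^ q * M + (1 + q) * M ^ q * M := by gcongr
    _ = (3 + q) * M ^ (1 + q) := by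
        rw [Real.rpow_one_add' (by positivity) (by linarith)]; ring

theorem norm_add_sq_eq (z w : ℂ) :
    ‖z + w‖ ^ 2 = ‖z‖ ^ 2 + 2 * ((starRingEnd ℂ) z * w).re + ‖w‖ ^ 2 := by
  rw [Complex.sq_norm, Complex.sq_norm, Complex.sq_norm, normSq_add, ← conj_re, map_mul, conj_conj]
  ring

theorem abs_norm_add_rpow_sub_sub_le {q : ℝ} (hq0 : 0 < q) (hq2 : q ≤ 2) {z w : ℂ}
    (h : 2 * ‖w‖ < ‖z‖) :
    |‖z + w‖ ^ q - ‖z‖ ^ q - q * ‖z‖ ^ (q - 2) * ((starRingEnd ℂ) z * w).re|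
      ≤ 13 * q * ‖z‖ ^ (q - 2) * ‖w‖ ^ 2 := by
  set r := ‖z‖
  set s := ‖w‖
  set ρ := ‖z + w‖
  set R := ((starRingEnd ℂ) z * w).re
  have hs : 0 ≤ s := norm_nonneg w
  have hr : 0 < r := by linarith
  have hρ : r / 2 < ρ := by
    have := norm_sub_le (z + w) w
    rw [add_sub_cancel_right] at this
    linarith
  have hρ0 : 0 < ρ := by linarith
  have hρ_sq : ρ ^ 2 - r ^ 2 = 2 * R + s ^ 2 := by rw [norm_add_sq_eq]; ring
  have rpow_eq (t : ℝ) (ht : 0 ≤ t) : (t ^ 2) ^ (q / 2) = t ^ q := by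
    rw [← Real.rpow_natCast_mul ht]; push_cast; ring_nf
  have hK : r ^ (q - 2) = r ^ q / r ^ 2 := by rw [Real.rpow_sub hr, Real.rpow_two]
  have taylor := abs_rpow_sub_rpow_sub_mul_le (p := q / 2) (by positivity) (by linarith)
    (pow_pos hr 2) (by positivity : 0 < ρ ^ 2)
  rw [rpow_eq r hr.le, rpow_eq ρ (by positivity), hρ_sq, ← hK] at taylor
  have hR : |2 * R + s ^ 2| ≤ 5 / 2 * r * s := by
    have := abs_re_conj_mul_le z w
    calc |2 * R + s ^ 2| ≤ 2 * |R| + s ^ 2 := by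
          refine (abs_add_le _ _).trans_eq ?_
          rw [abs_mul, abs_two, abs_sq]
      _ ≤ 5 / 2 * r * s := by nlinarith
  have hquot : (2 * R + s ^ 2) ^ 2 / ρ ^ 2 ≤ 25 * s ^ 2 := by
    rw [div_le_iff₀ (by positivity), ← sq_abs]
    calc |2 * R + s ^ 2| ^ 2 ≤ (5 / 2 * r * s) ^ 2 := by gcongr
      _ = 25 * s ^ 2 * (r / 2) ^ 2 := by ring
      _ ≤ 25 * s ^ 2 * ρ ^ 2 := by gcongr
  calc |ρ ^ q - r ^ q - q * r ^ (q - 2) * R|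
      = |(ρ ^ q - r ^ q - q / 2 * r ^ (q - 2) * (2 * R + s ^ 2))
          + q / 2 * r ^ (q - 2) * s ^ 2| := by
        congr 1; ring
    _ ≤ q / 2 * r ^ (q - 2) * (2 * R + s ^ 2) ^ 2 / ρ ^ 2 + q / 2 * r ^ (q - 2) * s ^ 2 := by
        refine (abs_add_le _ _).trans (add_le_add taylor (abs_of_nonneg (by positivity)).le)
    _ ≤ q / 2 * r ^ (q - 2) * (25 * s ^ 2) + q / 2 * r ^ (q - 2) * s ^ 2 := by
        rw [mul_div_assoc]; gcongr
    _ = 13 * q * r ^ (q - 2) * s ^ 2 := by ring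

theorem norm_powMul_add_sub_sub_le_of_two_mul_lt {q : ℝ} (hq0 : 0 < q) (hq2 : q ≤ 2) {z w : ℂ}
    (h : 2 * ‖w‖ < ‖z‖) :
    ‖powMul q (z + w) - powMul q z - powMulDeriv q z w‖ ≤ 21 * q * ‖z‖ ^ (q - 1) * ‖w‖ ^ 2 := by
  set D := q * ‖z‖ ^ (q - 2) * ((starRingEnd ℂ) z * w).re
  have hz : 0 < ‖z‖ := by linarith [norm_nonneg w]
  have split : powMul q (z + w) - powMul q z - powMulDeriv q z w
      = ((‖z + w‖ ^ q - ‖z‖ ^ q - D : ℝ) : ℂ) * (z + w) + (D : ℂ) * w := by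
    simp only [powMul, powMulDeriv, D]; push_cast; ring
  calc ‖powMul q (z + w) - powMul q z - powMulDeriv q z w‖
      ≤ |‖z + w‖ ^ q - ‖z‖ ^ q - D| * ‖z + w‖ + |D| * ‖w‖ := by
        rw [split]
        refine (norm_add_le _ _).trans_eq ?_
        rw [norm_mul, norm_mul, norm_real, norm_real, Real.norm_eq_abs, Real.norm_eq_abs]
    _ ≤ 13 * q * ‖z‖ ^ (q - 2) * ‖w‖ ^ 2 * (3 / 2 * ‖z‖)
          + q * ‖z‖ ^ (q - 2) * (‖z‖ * ‖w‖) * ‖w‖ := by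
        gcongr
        · exact abs_norm_add_rpow_sub_sub_le hq0 hq2 h
        · linarith [norm_add_le z w]
        · exact abs_mul_rpow_sub_two_mul_re_le hq0.le z w
    _ ≤ 21 * q * ‖z‖ ^ (q - 1) * ‖w‖ ^ 2 := by
        rw [show q - 1 = q - 2 + 1 by ring, Real.rpow_add_one hz.ne']
        have : 0 ≤ q * ‖z‖ ^ (q - 2) * ‖z‖ * ‖w‖ ^ 2 := by positivity
        linarith

/-- for `0 < q ≤ 1`, the first-order Taylor remainder of `f(z) = |z|^q z`
satisfies `|f(z+w) − f(z) − df(z)(w)| ≤ C|w|^{1+q}`, where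
`df(z)(w) = |z|^q w + q|z|^{q−2} Re(conj(z) w) z` (with `df(0) = 0`; note that
`‖(0:ℂ)‖ ^ q = 0` and `‖(0:ℂ)‖ ^ (q-2) = 0` for the real power function). -/
theorem f_taylor_first_order (q : ℝ) (hq0 : 0 < q) (hq1 : q ≤ 1) :
    ∃ C : ℝ, 0 < C ∧ ∀ z w : ℂ,
      ‖((‖z + w‖ ^ q : ℝ) : ℂ) * (z + w) - ((‖z‖ ^ q : ℝ) : ℂ) * z -
          (((‖z‖ ^ q : ℝ) : ℂ) * w +
            ((q * ‖z‖ ^ (q - 2) * ((starRingEnd ℂ) z * w).re : ℝ) : ℂ) * z)‖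
        ≤ C * ‖w‖ ^ (1 + q) := by
  refine ⟨36, by norm_num, fun z w => ?_⟩
  change ‖powMul q (z + w) - powMul q z - powMulDeriv q z w‖ ≤ 36 * ‖w‖ ^ (1 + q)
  rcases le_or_gt ‖z‖ (2 * ‖w‖) with h | h
  · have h3 : (3 : ℝ) ^ (1 + q) ≤ 9 := by
      calc (3 : ℝ) ^ (1 + q) ≤ 3 ^ (2 : ℝ) :=
            Real.rpow_le_rpow_of_exponent_le (by norm_num) (by linarith)
        _ = 9 := by norm_num
    calc _ ≤ (3 + q) * (3 * ‖w‖) ^ (1 + q) := norm_powMul_add_sub_sub_le_of_norm_le hq0 h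
      _ = (3 + q) * 3 ^ (1 + q) * ‖w‖ ^ (1 + q) := by
          rw [Real.mul_rpow (by norm_num) (norm_nonneg w)]; ring
      _ ≤ 4 * 9 * ‖w‖ ^ (1 + q) := by gcongr; linarith
      _ = 36 * ‖w‖ ^ (1 + q) := by norm_num
  · calc _ ≤ 21 * q * ‖z‖ ^ (q - 1) * ‖w‖ ^ 2 :=
          norm_powMul_add_sub_sub_le_of_two_mul_lt hq0 (by linarith) h
      _ = 21 * q * (‖z‖ ^ (q - 1) * ‖w‖ ^ 2) := by ring
      _ ≤ 21 * 1 * ‖w‖ ^ (1 + q) := by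
          gcongr
          exact rpow_sub_one_mul_sq_le_rpow_one_add hq1 (norm_nonneg w)
            (by linarith [norm_nonneg w])
      _ ≤ 36 * ‖w‖ ^ (1 + q) := by gcongr; norm_num
end

section
/- For every q with 0 < q ≤ 1 there exists a constant C > 0 such that for all z ∈ ℂ \ {0} and all w ∈ ℂ: | |z+w|^{q+2}/(q+2) − |z|^{q+2}/(q+2) − Re(|z|^q z · conj(w)) − (1/2)( |z|^q |w|² + q |z|^{q−2} (Re(conj(z)·w))² ) | ≤ C |w|^{q+2}. -/
/-!
Write `ρ t = ‖z + t • w‖`. When `2‖w‖ ≤ ‖z‖`, `ρ ≥ ‖w‖` on `[0, 1]` and the remainder is the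
second-order Taylor remainder of `t ↦ ρ t ^ (q + 2) / (q + 2)` on `[0, 1]`. By Cauchy–Schwarz
its third derivative is at most `3 ‖w‖³ ρ^(q-1)`, and `ρ^(q-1) ≤ ‖w‖^(q-1)` because `q ≤ 1`.
When `‖z‖ < 2‖w‖`, each term of the remainder is separately `O(‖w‖^(q+2))`.
-/

open Set Real

open scoped RealInnerProductSpace

theorem abs_sub_le_of_hasDerivAt_Icc_zero_one {f f' : ℝ → ℝ} {M : ℝ}
    (hf : ∀ t ∈ Icc (0 : ℝ) 1, HasDerivAt f (f' t) t) (hM : ∀ t ∈ Icc (0 : ℝ) 1, |f' t| ≤ M) :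
    ∀ t ∈ Icc (0 : ℝ) 1, |f t - f 0| ≤ M := by
  intro t ht
  have hM0 : 0 ≤ M := (abs_nonneg _).trans (hM 0 (left_mem_Icc.2 zero_le_one))
  calc |f t - f 0| ≤ M * (t - 0) :=
        norm_image_sub_le_of_norm_deriv_le_segment' (fun s hs => (hf s hs).hasDerivWithinAt)
          (fun s hs => hM s (Ico_subset_Icc_self hs)) t ht
    _ ≤ M := by nlinarith [ht.2]

theorem abs_taylor_two_le_of_hasDerivAt {f f₁ f₂ f₃ : ℝ → ℝ} {M : ℝ}
    (h₁ : ∀ t ∈ Icc (0 : ℝ) 1, HasDerivAt f (f₁ t) t)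
    (h₂ : ∀ t ∈ Icc (0 : ℝ) 1, HasDerivAt f₁ (f₂ t) t)
    (h₃ : ∀ t ∈ Icc (0 : ℝ) 1, HasDerivAt f₂ (f₃ t) t)
    (hM : ∀ t ∈ Icc (0 : ℝ) 1, |f₃ t| ≤ M) :
    |f 1 - f 0 - f₁ 0 - f₂ 0 / 2| ≤ M := by
  have hf₂ : ∀ t ∈ Icc (0 : ℝ) 1, |f₂ t - f₂ 0| ≤ M :=
    abs_sub_le_of_hasDerivAt_Icc_zero_one h₃ hM
  have hf₁ : ∀ t ∈ Icc (0 : ℝ) 1, |f₁ t - f₁ 0 - f₂ 0 * t| ≤ M := by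
    simpa using abs_sub_le_of_hasDerivAt_Icc_zero_one (f := fun t => f₁ t - f₁ 0 - f₂ 0 * t)
      (fun t ht => (((h₂ t ht).sub_const _).sub ((hasDerivAt_id t).const_mul _)).congr_deriv
        (by simp)) hf₂
  have hf := abs_sub_le_of_hasDerivAt_Icc_zero_one
    (f := fun t => f t - f₁ 0 * t - f₂ 0 * t ^ 2 / 2) (f' := fun t => f₁ t - f₁ 0 - f₂ 0 * t)
    (fun t ht => (((h₁ t ht).sub ((hasDerivAt_id t).const_mul _)).sub
      (((hasDerivAt_pow 2 t).const_mul _).div_const 2)).congr_deriv (by push_cast; ring))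
    hf₁ 1 (right_mem_Icc.2 zero_le_one)
  convert hf using 2
  ring

-- `-2 ≤ q - 2 < 0` and `v ^ 2 ≤ β ^ 2` keep the bracket in `[β ^ 2, 3 * β ^ 2]`.
theorem abs_mul_mul_three_mul_sq_add_le {q v β : ℝ} (hq0 : 0 ≤ q) (hq1 : q ≤ 1) (hv : |v| ≤ β) :
    |q * v * (3 * β ^ 2 + (q - 2) * v ^ 2)| ≤ 3 * β ^ 3 := by
  have hv2 : v ^ 2 ≤ β ^ 2 := sq_le_sq' (abs_le.1 hv).1 (abs_le.1 hv).2
  have hqv : |q * v| ≤ β := by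
    rw [abs_mul, abs_of_nonneg hq0]
    nlinarith [abs_nonneg v]
  have hbracket : |3 * β ^ 2 + (q - 2) * v ^ 2| ≤ 3 * β ^ 2 := by
    rw [abs_le]; constructor <;> nlinarith [sq_nonneg v]
  rw [abs_mul, show 3 * β ^ 3 = β * (3 * β ^ 2) by ring]
  exact mul_le_mul hqv hbracket (abs_nonneg _) ((abs_nonneg _).trans hv)

-- The third derivative of `t ↦ ‖z + t • w‖ ^ (q + 2) / (q + 2)`, where
-- `ρ = ‖z + t • w‖`, `u = ⟪z + t • w, w⟫` and `β = ‖w‖`.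
theorem abs_third_deriv_norm_rpow_le {q ρ u β : ℝ} (hq0 : 0 ≤ q) (hq1 : q ≤ 1) (hβ : 0 < β)
    (hβρ : β ≤ ρ) (hu : |u| ≤ ρ * β) :
    |3 * q * ρ ^ (q - 2) * u * β ^ 2 + q * (q - 2) * ρ ^ (q - 4) * u ^ 3| ≤ 3 * β ^ (q + 2) := by
  have hρ : 0 < ρ := hβ.trans_le hβρ
  have hv : |u / ρ| ≤ β := by
    rwa [abs_div, abs_of_pos hρ, div_le_iff₀ hρ, mul_comm]
  have hfactor : 3 * q * ρ ^ (q - 2) * u * β ^ 2 + q * (q - 2) * ρ ^ (q - 4) * u ^ 3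
      = ρ ^ (q - 1) * (q * (u / ρ) * (3 * β ^ 2 + (q - 2) * (u / ρ) ^ 2)) := by
    rw [show q - 4 = q - 1 - (3 : ℕ) by push_cast; ring,
      show q - 2 = q - 1 - (1 : ℕ) by push_cast; ring,
      rpow_sub_natCast hρ.ne', rpow_sub_natCast hρ.ne']
    field_simp
  have hpow : β ^ (q - 1) * β ^ 3 = β ^ (q + 2) := by
    rw [← rpow_add_natCast hβ.ne']; push_cast; ring_nf
  calc |3 * q * ρ ^ (q - 2) * u * β ^ 2 + q * (q - 2) * ρ ^ (q - 4) * u ^ 3|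
      = ρ ^ (q - 1) * |q * (u / ρ) * (3 * β ^ 2 + (q - 2) * (u / ρ) ^ 2)| := by
        rw [hfactor, abs_mul, abs_of_pos (rpow_pos_of_pos hρ _)]
    _ ≤ β ^ (q - 1) * (3 * β ^ 3) := mul_le_mul (rpow_le_rpow_of_nonpos hβ hβρ (by linarith))
        (abs_mul_mul_three_mul_sq_add_le hq0 hq1 hv) (abs_nonneg _) (by positivity)
    _ = 3 * β ^ (q + 2) := by rw [← hpow]; ring

section InnerProductSpace

variable {E : Type*} [NormedAddCommGroup E] [InnerProductSpace ℝ E]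

theorem hasDerivAt_norm_add_smul_rpow (z w : E) (p : ℝ) {t : ℝ} (h : z + t • w ≠ 0) :
    HasDerivAt (fun s : ℝ => ‖z + s • w‖ ^ p) (p * ‖z + t • w‖ ^ (p - 2) * ⟪z + t • w, w⟫) t := by
  have hline : HasDerivAt (fun s : ℝ => z + s • w) w t := by
    simpa using ((hasDerivAt_id t).smul_const w).const_add z
  have hpos : 0 < ‖z + t • w‖ := norm_pos_iff.2 h
  have hsq := hline.norm_sq.rpow_const (p := p / 2) (Or.inl (by positivity))
  have hnorm : ∀ (x : E) (r : ℝ), (‖x‖ ^ 2) ^ r = ‖x‖ ^ (2 * r) := fun x r => by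
    rw [← Real.rpow_natCast, ← Real.rpow_mul (norm_nonneg x), Nat.cast_ofNat]
  simp only [hnorm, mul_div_cancel₀ p two_ne_zero] at hsq
  refine hsq.congr_deriv ?_
  rw [show 2 * (p / 2 - 1) = p - 2 by ring]
  ring

theorem norm_le_norm_add_smul_of_two_mul_norm_le {z w : E} (hwz : 2 * ‖w‖ ≤ ‖z‖) {t : ℝ}
    (ht : t ∈ Icc (0 : ℝ) 1) : ‖w‖ ≤ ‖z + t • w‖ := by
  have htw : ‖t • w‖ ≤ ‖w‖ := by
    rw [norm_smul, Real.norm_of_nonneg ht.1]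
    exact mul_le_of_le_one_left (norm_nonneg w) ht.2
  have := norm_sub_norm_le z (z + t • w)
  rw [sub_add_cancel_left, norm_neg] at this
  linarith

theorem norm_rpow_sub_two_mul_inner_sq_le {z : E} (hz : z ≠ 0) (q : ℝ) (w : E) :
    ‖z‖ ^ (q - 2) * ⟪z, w⟫ ^ 2 ≤ ‖z‖ ^ q * ‖w‖ ^ 2 := by
  have hz0 : 0 < ‖z‖ := norm_pos_iff.2 hz
  have hinner := abs_real_inner_le_norm z w
  calc ‖z‖ ^ (q - 2) * ⟪z, w⟫ ^ 2 ≤ ‖z‖ ^ (q - 2) * (‖z‖ * ‖w‖) ^ 2 := by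
        gcongr ‖z‖ ^ (q - 2) * ?_
        exact sq_le_sq' (abs_le.1 hinner).1 (abs_le.1 hinner).2
    _ = ‖z‖ ^ q * ‖w‖ ^ 2 := by
        rw [show q - 2 = q - (2 : ℕ) by norm_num, rpow_sub_natCast hz0.ne']
        field_simp

noncomputable def normRpowTaylorRemainder (q : ℝ) (z w : E) : ℝ :=
  ‖z + w‖ ^ (q + 2) / (q + 2) - ‖z‖ ^ (q + 2) / (q + 2) - ‖z‖ ^ q * ⟪z, w⟫
    - 1 / 2 * (‖z‖ ^ q * ‖w‖ ^ 2 + q * ‖z‖ ^ (q - 2) * ⟪z, w⟫ ^ 2)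

theorem abs_normRpowTaylorRemainder_le_of_two_mul_norm_le {q : ℝ} (hq0 : 0 ≤ q) (hq1 : q ≤ 1)
    {z w : E} (hw : w ≠ 0) (hwz : 2 * ‖w‖ ≤ ‖z‖) :
    |normRpowTaylorRemainder q z w| ≤ 3 * ‖w‖ ^ (q + 2) := by
  set ρ : ℝ → ℝ := fun t => ‖z + t • w‖
  set u : ℝ → ℝ := fun t => ⟪z + t • w, w⟫
  have hw0 : 0 < ‖w‖ := norm_pos_iff.2 hw
  have hρ : ∀ t ∈ Icc (0 : ℝ) 1, ‖w‖ ≤ ρ t := fun t ht =>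
    norm_le_norm_add_smul_of_two_mul_norm_le hwz ht
  have hne : ∀ t ∈ Icc (0 : ℝ) 1, z + t • w ≠ 0 := fun t ht =>
    norm_pos_iff.1 (hw0.trans_le (hρ t ht))
  have hρpow : ∀ p, ∀ t ∈ Icc (0 : ℝ) 1,
      HasDerivAt (fun s => ρ s ^ p) (p * ρ t ^ (p - 2) * u t) t := fun p t ht =>
    hasDerivAt_norm_add_smul_rpow z w p (hne t ht)
  have hu : ∀ t, HasDerivAt u (‖w‖ ^ 2) t := fun t => by
    simpa [u, inner_add_left, inner_smul_left, real_inner_self_eq_norm_sq] using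
      ((hasDerivAt_id t).mul_const (‖w‖ ^ 2)).const_add ⟪z, w⟫
  have key := abs_taylor_two_le_of_hasDerivAt (M := 3 * ‖w‖ ^ (q + 2))
    (f := fun t => ρ t ^ (q + 2) / (q + 2))
    (f₁ := fun t => ρ t ^ q * u t)
    (f₂ := fun t => ρ t ^ q * ‖w‖ ^ 2 + q * ρ t ^ (q - 2) * u t ^ 2)
    (f₃ := fun t => 3 * q * ρ t ^ (q - 2) * u t * ‖w‖ ^ 2 + q * (q - 2) * ρ t ^ (q - 4) * u t ^ 3)
    (fun t ht => ((hρpow _ t ht).div_const _).congr_deriv (by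
      rw [add_sub_cancel_right]; field_simp))
    (fun t ht => ((hρpow q t ht).fun_mul (hu t)).congr_deriv (by ring))
    (fun t ht => (((hρpow q t ht).mul_const _).fun_add
      (((hρpow (q - 2) t ht).const_mul q).fun_mul ((hu t).fun_pow 2))).congr_deriv (by
        rw [show q - 2 - 2 = q - 4 by ring]; push_cast; ring))
    (fun t ht => abs_third_deriv_norm_rpow_le hq0 hq1 hw0 (hρ t ht)
      (abs_real_inner_le_norm _ _))
  convert key using 2
  simp only [normRpowTaylorRemainder, one_smul, zero_smul, add_zero, ρ, u]
  ring

theorem abs_normRpowTaylorRemainder_le_of_norm_le_two_mul {q : ℝ} (hq0 : 0 ≤ q) (hq1 : q ≤ 1)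
    {z w : E} (hz : z ≠ 0) (hzw : ‖z‖ ≤ 2 * ‖w‖) :
    |normRpowTaylorRemainder q z w| ≤ 81 * ‖w‖ ^ (q + 2) := by
  set m := 3 * ‖w‖
  have hz0 : 0 < ‖z‖ := norm_pos_iff.2 hz
  have hzm : ‖z‖ ≤ m := by linarith [norm_nonneg w]
  have hwm : ‖w‖ ≤ m := by linarith [norm_nonneg w]
  have hzwm : ‖z + w‖ ≤ m := by linarith [norm_add_le z w]
  have hm0 : 0 ≤ m := hwm.trans' (norm_nonneg w)
  have hmpow : m ^ (q + 2) = m ^ q * m ^ 2 := by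
    rw [← rpow_add_natCast' hm0 (by positivity)]; norm_num
  have hpow_div : ∀ x, 0 ≤ x → x ≤ m → x ^ (q + 2) / (q + 2) ≤ m ^ (q + 2) / 2 := fun x hx hxm =>
    div_le_div₀ (by positivity) (rpow_le_rpow hx hxm (by positivity)) two_pos (by linarith)
  have hzq : ‖z‖ ^ q ≤ m ^ q := rpow_le_rpow hz0.le hzm hq0
  have hinner := abs_real_inner_le_norm z w
  have hlinear : |‖z‖ ^ q * ⟪z, w⟫| ≤ m ^ (q + 2) := by
    rw [abs_mul, abs_of_nonneg (by positivity), hmpow, sq]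
    exact mul_le_mul hzq (hinner.trans (mul_le_mul hzm hwm (norm_nonneg w) hm0)) (abs_nonneg _)
      (by positivity)
  have hsecond : 0 ≤ ‖z‖ ^ q * ‖w‖ ^ 2 + q * ‖z‖ ^ (q - 2) * ⟪z, w⟫ ^ 2 ∧
      ‖z‖ ^ q * ‖w‖ ^ 2 + q * ‖z‖ ^ (q - 2) * ⟪z, w⟫ ^ 2 ≤ 2 * m ^ (q + 2) := by
    have hzw2 : ‖z‖ ^ q * ‖w‖ ^ 2 ≤ m ^ (q + 2) := by
      rw [hmpow]; gcongr
    have hquad : q * ‖z‖ ^ (q - 2) * ⟪z, w⟫ ^ 2 ≤ ‖z‖ ^ q * ‖w‖ ^ 2 := by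
      rw [mul_assoc]
      exact (mul_le_mul_of_nonneg_left (norm_rpow_sub_two_mul_inner_sq_le hz q w) hq0).trans
        (mul_le_of_le_one_left (by positivity) hq1)
    exact ⟨by positivity, by linarith⟩
  have h3pow : m ^ (q + 2) ≤ 27 * ‖w‖ ^ (q + 2) := by
    rw [mul_rpow (by norm_num) (norm_nonneg w)]
    gcongr
    calc (3 : ℝ) ^ (q + 2) ≤ 3 ^ (3 : ℝ) := rpow_le_rpow_of_exponent_le (by norm_num) (by linarith)
      _ = 27 := by norm_num
  have h1 := hpow_div _ (norm_nonneg _) hzwm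
  have h2 := hpow_div _ hz0.le hzm
  have h0 : 0 ≤ ‖z + w‖ ^ (q + 2) / (q + 2) := by positivity
  have h0' : 0 ≤ ‖z‖ ^ (q + 2) / (q + 2) := by positivity
  unfold normRpowTaylorRemainder
  rw [abs_le] at hlinear ⊢
  constructor <;> linarith [hsecond.1, hsecond.2, hlinear.1, hlinear.2]

theorem abs_normRpowTaylorRemainder_le {q : ℝ} (hq0 : 0 ≤ q) (hq1 : q ≤ 1) {z : E} (hz : z ≠ 0)
    (w : E) : |normRpowTaylorRemainder q z w| ≤ 81 * ‖w‖ ^ (q + 2) := by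
  rcases eq_or_ne w 0 with rfl | hw
  · simp [normRpowTaylorRemainder, zero_rpow (by positivity : q + 2 ≠ 0)]
  rcases le_or_gt ‖z‖ (2 * ‖w‖) with hzw | hwz
  · exact abs_normRpowTaylorRemainder_le_of_norm_le_two_mul hq0 hq1 hz hzw
  · refine (abs_normRpowTaylorRemainder_le_of_two_mul_norm_le hq0 hq1 hw hwz.le).trans ?_
    gcongr
    norm_num

end InnerProductSpace

/-- for `0 < q ≤ 1`, the second-order Taylor remainder of
`F(z) = |z|^{q+2}/(q+2)` satisfies, for `z ≠ 0`,
`|F(z+w) − F(z) − Re(f(z) conj w) − ½(|z|^q|w|² + q|z|^{q−2}(Re(conj(z)w))²)| ≤ C|w|^{q+2}`. -/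
theorem F_taylor_second_order (q : ℝ) (hq0 : 0 < q) (hq1 : q ≤ 1) :
    ∃ C : ℝ, 0 < C ∧ ∀ z : ℂ, z ≠ 0 → ∀ w : ℂ,
      |‖z + w‖ ^ (q + 2) / (q + 2) - ‖z‖ ^ (q + 2) / (q + 2)
          - (((‖z‖ ^ q : ℝ) : ℂ) * z * (starRingEnd ℂ) w).re
          - (1 / 2) * (‖z‖ ^ q * ‖w‖ ^ 2
              + q * ‖z‖ ^ (q - 2) * (((starRingEnd ℂ) z * w).re) ^ 2)|
        ≤ C * ‖w‖ ^ (q + 2) := by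
  refine ⟨81, by norm_num, fun z hz w => ?_⟩
  have hlinear : (((‖z‖ ^ q : ℝ) : ℂ) * z * (starRingEnd ℂ) w).re = ‖z‖ ^ q * ⟪z, w⟫ := by
    rw [mul_assoc, Complex.re_ofReal_mul, ← Complex.inner, real_inner_comm]
  have hinner : ((starRingEnd ℂ) z * w).re = ⟪z, w⟫ := by
    rw [Complex.inner, mul_comm]
  rw [hlinear, hinner]
  exact abs_normRpowTaylorRemainder_le hq0.le hq1 hz w
end

section
/- For every q with 0 < q ≤ 1 there exists a constant C > 0 such that for all z₁, z₂ ∈ ℂ \ {0} and all w ∈ ℂ: | ( |z₁|^q |w|² + q |z₁|^{q−2} (Re(conj(z₁)·w))² ) − ( |z₂|^q |w|² + q |z₂|^{q−2} (Re(conj(z₂)·w))² ) | ≤ C |z₁ − z₂|^q |w|². -/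
/-!
Write `B(z; w) = ‖z‖^q (‖w‖² + q ⟪ẑ, w⟫²)` with `ẑ = z / ‖z‖`. The difference `B(z₁; w) - B(z₂; w)`
splits into a radial part `(‖z₁‖^q - ‖z₂‖^q)(‖w‖² + q ⟪ẑ₁, w⟫²)`, controlled by the `q`-Hölder
continuity of `r ↦ r^q`, and an angular part `q ‖z₂‖^q (⟪ẑ₁, w⟫² - ⟪ẑ₂, w⟫²)`. For the latter,
`‖ẑ₁ - ẑ₂‖ ≤ 2` and `‖z₂‖ ‖ẑ₁ - ẑ₂‖ ≤ 2 ‖z₁ - z₂‖`; since `x ≤ x^q` on `[0, 1]`, these combine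
to `‖z₂‖^q ‖ẑ₁ - ẑ₂‖ ≤ 2 ‖z₁ - z₂‖^q`.
-/

open scoped RealInnerProductSpace

namespace Real

theorem abs_rpow_sub_rpow_le {p a b : ℝ} (ha : 0 ≤ a) (hb : 0 ≤ b) (hp : 0 ≤ p) (hp1 : p ≤ 1) :
    |a ^ p - b ^ p| ≤ |a - b| ^ p := by
  wlog hba : b ≤ a generalizing a b
  · rw [abs_sub_comm, abs_sub_comm a]
    exact this hb ha (le_of_not_ge hba)
  have h := rpow_add_le_add_rpow (sub_nonneg.2 hba) hb hp hp1
  rw [sub_add_cancel] at h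
  rw [abs_of_nonneg (sub_nonneg.2 hba), abs_of_nonneg (sub_nonneg.2 (rpow_le_rpow hb hba hp))]
  linarith

theorem rpow_mul_le_rpow_of_mul_le {p r x d : ℝ} (hr : 0 ≤ r) (hx : 0 ≤ x) (hx1 : x ≤ 1)
    (hp : 0 ≤ p) (hp1 : p ≤ 1) (h : r * x ≤ d) : r ^ p * x ≤ d ^ p :=
  calc r ^ p * x ≤ r ^ p * x ^ p := by gcongr; exact self_le_rpow_of_le_one hx hx1 hp1
    _ = (r * x) ^ p := (mul_rpow hr hx).symm
    _ ≤ d ^ p := by gcongr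

end Real

namespace NormedSpace

variable {V : Type*} [NormedAddCommGroup V] [NormedSpace ℝ V]

theorem norm_normalize_le_one (x : V) : ‖normalize x‖ ≤ 1 := by
  rcases eq_or_ne x 0 with rfl | hx
  · simp [normalize_zero_eq_zero]
  · exact (norm_normalize_eq_one_iff.2 hx).le

theorem norm_normalize_sub_normalize_le_two (x y : V) : ‖normalize x - normalize y‖ ≤ 2 := by
  linarith [norm_sub_le (normalize x) (normalize y), norm_normalize_le_one x,
    norm_normalize_le_one y]

theorem norm_mul_norm_normalize_sub_normalize_le (x y : V) :
    ‖y‖ * ‖normalize x - normalize y‖ ≤ 2 * ‖x - y‖ := by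
  have key : ‖y‖ • (normalize x - normalize y) = (‖y‖ - ‖x‖) • normalize x + (x - y) := by
    rw [smul_sub, norm_smul_normalize, sub_smul, norm_smul_normalize]
    abel
  calc ‖y‖ * ‖normalize x - normalize y‖ = ‖‖y‖ • (normalize x - normalize y)‖ := by
        rw [norm_smul, norm_norm]
    _ ≤ |‖y‖ - ‖x‖| * ‖normalize x‖ + ‖x - y‖ := by
        rw [key, ← Real.norm_eq_abs, ← norm_smul]
        exact norm_add_le _ _
    _ ≤ ‖x - y‖ * 1 + ‖x - y‖ := by
        gcongr
        · rw [abs_sub_comm]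
          exact abs_norm_sub_norm_le x y
        · exact norm_normalize_le_one x
    _ = 2 * ‖x - y‖ := by ring

theorem rpow_norm_mul_norm_normalize_sub_normalize_le {p : ℝ} (hp : 0 ≤ p) (hp1 : p ≤ 1)
    (x y : V) : ‖y‖ ^ p * ‖normalize x - normalize y‖ ≤ 2 * ‖x - y‖ ^ p := by
  have h := Real.rpow_mul_le_rpow_of_mul_le (norm_nonneg y)
    (x := ‖normalize x - normalize y‖ / 2) (d := ‖x - y‖) (by positivity)
    (by linarith [norm_normalize_sub_normalize_le_two x y]) hp hp1
    (by linarith [norm_mul_norm_normalize_sub_normalize_le x y])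
  linarith

end NormedSpace

section HessianForm

variable {E : Type*} [NormedAddCommGroup E] [InnerProductSpace ℝ E]

theorem real_inner_sq_le_of_norm_le_one {u : E} (hu : ‖u‖ ≤ 1) (w : E) :
    ⟪u, w⟫ ^ 2 ≤ ‖w‖ ^ 2 := by
  rw [← sq_abs]
  gcongr
  exact (abs_real_inner_le_norm u w).trans (mul_le_of_le_one_left (norm_nonneg w) hu)

theorem abs_real_inner_sq_sub_real_inner_sq_le {u v : E} (hu : ‖u‖ ≤ 1) (hv : ‖v‖ ≤ 1) (w : E) :
    |⟪u, w⟫ ^ 2 - ⟪v, w⟫ ^ 2| ≤ 2 * ‖u - v‖ * ‖w‖ ^ 2 := by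
  have factor : ⟪u, w⟫ ^ 2 - ⟪v, w⟫ ^ 2 = ⟪u - v, w⟫ * ⟪u + v, w⟫ := by
    rw [inner_sub_left, inner_add_left]
    ring
  calc |⟪u, w⟫ ^ 2 - ⟪v, w⟫ ^ 2| = |⟪u - v, w⟫| * |⟪u + v, w⟫| := by rw [factor, abs_mul]
    _ ≤ (‖u - v‖ * ‖w‖) * ((‖u‖ + ‖v‖) * ‖w‖) := by
        gcongr
        · exact abs_real_inner_le_norm _ _
        · exact (abs_real_inner_le_norm _ _).trans (by gcongr; exact norm_add_le u v)
    _ ≤ (‖u - v‖ * ‖w‖) * ((1 + 1) * ‖w‖) := by gcongr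
    _ = 2 * ‖u - v‖ * ‖w‖ ^ 2 := by ring

/-- The Hessian `d²F(z)(w, w)` of `F(z) = ‖z‖ ^ (q + 2) / (q + 2)`. -/
noncomputable def hessianForm (q : ℝ) (z w : E) : ℝ :=
  ‖z‖ ^ q * ‖w‖ ^ 2 + q * ‖z‖ ^ (q - 2) * ⟪z, w⟫ ^ 2

theorem hessianForm_eq (q : ℝ) (z w : E) :
    hessianForm q z w = ‖z‖ ^ q * (‖w‖ ^ 2 + q * ⟪NormedSpace.normalize z, w⟫ ^ 2) := by
  rcases eq_or_ne z 0 with rfl | hz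
  · simp [hessianForm, NormedSpace.normalize_zero_eq_zero]
  · have hz' : 0 < ‖z‖ := norm_pos_iff.2 hz
    rw [hessianForm, NormedSpace.normalize, real_inner_smul_left, Real.rpow_sub hz', Real.rpow_two]
    field_simp

theorem abs_hessianForm_sub_hessianForm_le {q : ℝ} (hq0 : 0 ≤ q) (hq1 : q ≤ 1) (z₁ z₂ w : E) :
    |hessianForm q z₁ w - hessianForm q z₂ w| ≤ 6 * ‖z₁ - z₂‖ ^ q * ‖w‖ ^ 2 := by
  set a₁ := ⟪NormedSpace.normalize z₁, w⟫
  set a₂ := ⟪NormedSpace.normalize z₂, w⟫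
  have split : hessianForm q z₁ w - hessianForm q z₂ w
      = (‖z₁‖ ^ q - ‖z₂‖ ^ q) * (‖w‖ ^ 2 + q * a₁ ^ 2) + q * (‖z₂‖ ^ q * (a₁ ^ 2 - a₂ ^ 2)) := by
    rw [hessianForm_eq, hessianForm_eq]
    ring
  have radial : |‖z₁‖ ^ q - ‖z₂‖ ^ q| * (‖w‖ ^ 2 + q * a₁ ^ 2) ≤ ‖z₁ - z₂‖ ^ q * (2 * ‖w‖ ^ 2) := by
    have ha₁ := real_inner_sq_le_of_norm_le_one (NormedSpace.norm_normalize_le_one z₁) w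
    gcongr
    · calc |‖z₁‖ ^ q - ‖z₂‖ ^ q| ≤ |‖z₁‖ - ‖z₂‖| ^ q :=
            Real.abs_rpow_sub_rpow_le (norm_nonneg _) (norm_nonneg _) hq0 hq1
        _ ≤ ‖z₁ - z₂‖ ^ q := by gcongr; exact abs_norm_sub_norm_le z₁ z₂
    · nlinarith
  have angular : ‖z₂‖ ^ q * |a₁ ^ 2 - a₂ ^ 2| ≤ 4 * ‖z₁ - z₂‖ ^ q * ‖w‖ ^ 2 := by
    have hsq := abs_real_inner_sq_sub_real_inner_sq_le
      (NormedSpace.norm_normalize_le_one z₁) (NormedSpace.norm_normalize_le_one z₂) w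
    have hunit := NormedSpace.rpow_norm_mul_norm_normalize_sub_normalize_le hq0 hq1 z₁ z₂
    linarith [mul_le_mul_of_nonneg_left hsq (by positivity : 0 ≤ ‖z₂‖ ^ q),
      mul_le_mul_of_nonneg_right hunit (sq_nonneg ‖w‖)]
  calc |hessianForm q z₁ w - hessianForm q z₂ w|
      ≤ |‖z₁‖ ^ q - ‖z₂‖ ^ q| * (‖w‖ ^ 2 + q * a₁ ^ 2) + q * (‖z₂‖ ^ q * |a₁ ^ 2 - a₂ ^ 2|) := by
        rw [split]
        refine (abs_add_le _ _).trans_eq ?_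
        rw [abs_mul, abs_mul, abs_mul, abs_of_nonneg (by positivity : 0 ≤ ‖w‖ ^ 2 + q * a₁ ^ 2),
          abs_of_nonneg hq0, abs_of_nonneg (by positivity : 0 ≤ ‖z₂‖ ^ q)]
    _ ≤ ‖z₁ - z₂‖ ^ q * (2 * ‖w‖ ^ 2) + 1 * (4 * ‖z₁ - z₂‖ ^ q * ‖w‖ ^ 2) := by gcongr
    _ = 6 * ‖z₁ - z₂‖ ^ q * ‖w‖ ^ 2 := by ring

end HessianForm

/-- for `0 < q ≤ 1`, the Hessian quadratic form
`B(z; w) = |z|^q|w|² + q|z|^{q−2}(Re(conj(z)w))²` of `F(z) = |z|^{q+2}/(q+2)`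
is `q`-Hölder continuous in `z ≠ 0`, uniformly in `w`. -/
theorem hessian_holder (q : ℝ) (hq0 : 0 < q) (hq1 : q ≤ 1) :
    ∃ C : ℝ, 0 < C ∧ ∀ z₁ z₂ : ℂ, z₁ ≠ 0 → z₂ ≠ 0 → ∀ w : ℂ,
      |(‖z₁‖ ^ q * ‖w‖ ^ 2 + q * ‖z₁‖ ^ (q - 2) * (((starRingEnd ℂ) z₁ * w).re) ^ 2)
          - (‖z₂‖ ^ q * ‖w‖ ^ 2 + q * ‖z₂‖ ^ (q - 2) * (((starRingEnd ℂ) z₂ * w).re) ^ 2)|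
        ≤ C * ‖z₁ - z₂‖ ^ q * ‖w‖ ^ 2 := by
  refine ⟨6, by norm_num, fun z₁ z₂ _ _ w => ?_⟩
  have inner_eq (z : ℂ) : ⟪z, w⟫ = ((starRingEnd ℂ) z * w).re := by
    rw [Complex.inner, mul_comm]
  simpa only [hessianForm, inner_eq] using abs_hessianForm_sub_hessianForm_le hq0.le hq1 z₁ z₂ w
end
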